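/- arXiv:1209.1824 — 3 statements merged into one kernel-verified Lean document; each statement's English description precedes it below -/
import Mathlib

section
/- Let C > 0 with C ≠ 1, and let S ∈ ℝ with S ≠ 0. Then the function S ↦ (2/ln C)·C^{√|S|}·(√|S| − 1/ln C) is differentiable at S with derivative C^{√|S|}·sign(S), where sign(S) = 1 for S > 0 and sign(S) = −1 for S < 0. -/
/-! Write the function as `G (√|s|)` with `G t = (2 / ln C) C^t (t - 1 / ln C)`. Integrating
`t C^t` by parts shows `G' t = 2 t C^t`, while `(√|s|)' = sign s / (2 √|s|)`; in the chain rule the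
factor `2 √|S|` cancels, leaving `C^{√|S|} sign S`. -/

open Real

theorem Real.sign_eq_signType_sign (r : ℝ) : Real.sign r = (SignType.sign r : ℝ) := by
  rcases lt_trichotomy r 0 with h | rfl | h
  · simp [sign_of_neg h, h]
  · simp
  · simp [sign_of_pos h, h]

theorem hasDerivAt_abs_real_sign {x : ℝ} (hx : x ≠ 0) : HasDerivAt (|·|) (Real.sign x) x := by
  simpa only [Real.sign_eq_signType_sign] using hasDerivAt_abs hx

theorem hasDerivAt_sqrt_abs {x : ℝ} (hx : x ≠ 0) :
    HasDerivAt (fun s => √|s|) (Real.sign x / (2 * √|x|)) x :=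
  (hasDerivAt_abs_real_sign hx).sqrt (abs_ne_zero.mpr hx)

theorem hasDerivAt_div_log_mul_rpow_mul_sub {C : ℝ} (hC : 0 < C) (hlog : log C ≠ 0) (c t : ℝ) :
    HasDerivAt (fun t => c / log C * C ^ t * (t - 1 / log C)) (c * t * C ^ t) t := by
  have hexp : HasDerivAt (fun t => C ^ t) (C ^ t * log C) t :=
    (hasStrictDerivAt_const_rpow hC t).hasDerivAt
  refine ((hexp.const_mul (c / log C)).mul
    ((hasDerivAt_id' t).sub_const (1 / log C))).congr_deriv ?_
  field_simp
  ring

/-- Conclusion of case 2 (formula (14)): for `S ≠ 0`,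
`d/dS [(2/ln C) * C^{√|S|} * (√|S| - 1/ln C)] = C^{√|S|} * sign S`. -/
theorem stmt_5 (C : ℝ) (hC : 0 < C) (hC1 : C ≠ 1) (S : ℝ) (hS : S ≠ 0) :
    HasDerivAt (fun s : ℝ =>
        (2 / Real.log C) * C ^ Real.sqrt |s| * (Real.sqrt |s| - 1 / Real.log C))
      (C ^ Real.sqrt |S| * Real.sign S) S := by
  have hlog : log C ≠ 0 := log_ne_zero_of_pos_of_ne_one hC hC1
  have hsqrt : √|S| ≠ 0 := (sqrt_pos.mpr (abs_pos.mpr hS)).ne'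
  refine ((hasDerivAt_div_log_mul_rpow_mul_sub hC hlog 2 _).comp S
    (hasDerivAt_sqrt_abs hS)).congr_deriv ?_
  field_simp
end

section
/- Let C > 1. Then for all S, U ∈ ℝ, the inequality (1/ln C)·C^{|S|} + (1/ln C)·(|U|·ln|U| − |U|) + S·U ≥ 0 holds, where the term |U|·ln|U| is taken to be 0 when U = 0. -/
/-- Young's inequality for `exp` and `y log y - y`. -/
lemma young_exp_aux (x b : ℝ) (hb : 0 ≤ b) :
    x * b ≤ Real.exp x + (b * Real.log b - b) := by
  rcases eq_or_lt_of_le hb with h | h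
  · simp [← h]
    positivity
  · have h1 : (x - Real.log b) + 1 ≤ Real.exp (x - Real.log b) :=
      Real.add_one_le_exp _
    have h2 : b * ((x - Real.log b) + 1) ≤ b * Real.exp (x - Real.log b) :=
      mul_le_mul_of_nonneg_left h1 hb
    have h3 : b * Real.exp (x - Real.log b) = Real.exp x := by
      rw [Real.exp_sub, Real.exp_log h]
      field_simp
    nlinarith

/-- Young-type conjugacy inequality for case 1 (formulas (7), (11), (12)):
for `C > 1` and all `S U : ℝ`,
`(1/ln C) * C^{|S|} + (1/ln C) * (|U| * ln |U| - |U|) + S * U ≥ 0`.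
(With Mathlib's convention `Real.log 0 = 0`, the term `|U| * ln |U|` is
automatically `0` at `U = 0`.) -/
theorem stmt_10 (C : ℝ) (hC : 1 < C) (S U : ℝ) :
    (1 / Real.log C) * C ^ |S| + (1 / Real.log C) * (|U| * Real.log |U| - |U|)
      + S * U ≥ 0 := by
  have hC0 : (0 : ℝ) < C := lt_trans one_pos hC
  have hL : 0 < Real.log C := Real.log_pos hC
  have hpow : C ^ |S| = Real.exp (|S| * Real.log C) := by
    rw [Real.rpow_def_of_pos hC0, mul_comm]
  have key := young_exp_aux (|S| * Real.log C) |U| (abs_nonneg U)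
  have hSU : -(|S| * |U|) ≤ S * U := by
    rw [← abs_mul]; exact neg_abs_le _
  have hinv : 0 < 1 / Real.log C := by positivity
  have key2 := mul_le_mul_of_nonneg_left key hinv.le
  have hcancel : (1 / Real.log C) * (|S| * Real.log C * |U|) = |S| * |U| := by
    field_simp
  rw [hpow]
  nlinarith [key2, hSU, hcancel]
end

section
/- Let C > 1 and let S ∈ ℝ with S ≠ 0. Set U₀ = −C^{|S|}·sign(S), where sign(S) = 1 for S > 0 and sign(S) = −1 for S < 0. Then (1/ln C)·C^{|S|} + (1/ln C)·(|U₀|·ln|U₀| − |U₀|) + S·U₀ = 0. Moreover, for any U ∈ ℝ with U ≠ U₀, the strict inequality (1/ln C)·C^{|S|} + (1/ln C)·(|U|·ln|U| − |U|) + S·U > 0 holds (with |U|·ln|U| taken as 0 when U = 0). -/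
/-- Young-type strict inequality: for `u ≥ 0`, `u ≠ exp a`,
`u * a - exp a < u * log u - u`. -/
lemma young_strict (a u : ℝ) (hu : 0 ≤ u) (hne : u ≠ Real.exp a) :
    u * a - Real.exp a < u * Real.log u - u := by
  rcases eq_or_lt_of_le hu with h0 | h0
  · simp [← h0]
    positivity
  · have hx : a - Real.log u ≠ 0 := by
      intro h
      apply hne
      have : a = Real.log u := by linarith
      rw [this, Real.exp_log h0]
    have h1 := Real.add_one_lt_exp hx
    have h2 : Real.exp (a - Real.log u) = Real.exp a / u := by
      rw [Real.exp_sub, Real.exp_log h0]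
    rw [h2] at h1
    have h3 : u * (a - Real.log u + 1) < Real.exp a := by
      calc u * (a - Real.log u + 1) < u * (Real.exp a / u) := by
            exact (mul_lt_mul_iff_right₀ h0).mpr h1
        _ = Real.exp a := by field_simp
    nlinarith

lemma young_le (a u : ℝ) (hu : 0 ≤ u) :
    u * a - Real.exp a ≤ u * Real.log u - u := by
  by_cases h : u = Real.exp a
  · subst h
    rw [Real.log_exp]
  · exact le_of_lt (young_strict a u hu h)

/-- Equality case of the Young-type conjugacy inequality for case 1: with
`U₀ = -C^{|S|} * sign S` (formula (13)), `F(S) + G(U₀) + S * U₀ = 0`, and for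
any `U ≠ U₀` the inequality is strict. -/
theorem stmt_11 (C : ℝ) (hC : 1 < C) (S : ℝ) (hS : S ≠ 0)
    (U₀ : ℝ) (hU₀ : U₀ = -(C ^ |S|) * Real.sign S) :
    (1 / Real.log C) * C ^ |S| + (1 / Real.log C) * (|U₀| * Real.log |U₀| - |U₀|)
      + S * U₀ = 0 ∧
    ∀ U : ℝ, U ≠ U₀ →
      (1 / Real.log C) * C ^ |S| + (1 / Real.log C) * (|U| * Real.log |U| - |U|)
        + S * U > 0 := by
  have hL : 0 < Real.log C := Real.log_pos hC
  have hL' : Real.log C ≠ 0 := ne_of_gt hL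
  have hCpos : (0:ℝ) < C := lt_trans one_pos hC
  have hEpos : 0 < C ^ |S| := Real.rpow_pos_of_pos hCpos _
  have hE : C ^ |S| = Real.exp (|S| * Real.log C) := by
    rw [Real.rpow_def_of_pos hCpos, mul_comm]
  -- Facts about U₀
  have habs : |U₀| = C ^ |S| := by
    rcases hS.lt_or_gt with hneg | hpos
    · rw [hU₀, Real.sign_of_neg hneg]
      rw [abs_of_pos (by nlinarith)]
      ring
    · rw [hU₀, Real.sign_of_pos hpos]
      rw [abs_of_neg (by nlinarith)]
      ring
  have hSU : S * U₀ = -(|S| * C ^ |S|) := by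
    rcases hS.lt_or_gt with hneg | hpos
    · rw [hU₀, Real.sign_of_neg hneg, abs_of_neg hneg]; ring
    · rw [hU₀, Real.sign_of_pos hpos, abs_of_pos hpos]; ring
  have hlog : Real.log |U₀| = |S| * Real.log C := by
    rw [habs, hE, Real.log_exp]
  constructor
  · rw [hlog, hSU, habs]
    field_simp
    ring
  · intro U hUne
    have huabs : 0 ≤ |U| := abs_nonneg U
    have hSUle : -(|S| * |U|) ≤ S * U := by
      have := neg_abs_le (S * U)
      rw [abs_mul] at this
      linarith
    by_cases hcase : |U| = C ^ |S|
    · -- equality in Young: strictness comes from S*U > -(|S|*|U|)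
      have hSUlt : -(|S| * |U|) < S * U := by
        rcases lt_or_eq_of_le hSUle with h | h
        · exact h
        · exfalso
          apply hUne
          rcases hS.lt_or_gt with hneg | hpos
          · -- S < 0 : S * U = S * |U| forces U = |U|
            have : U = |U| := by
              rw [abs_of_neg hneg] at h
              have : S * U = S * |U| := by linarith
              exact mul_left_cancel₀ (ne_of_lt hneg) this
            rw [this, hcase, hU₀, Real.sign_of_neg hneg]; ring
          · have : U = -|U| := by
              rw [abs_of_pos hpos] at h
              have : S * U = S * (-|U|) := by linarith
              exact mul_left_cancel₀ (ne_of_gt hpos) this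
            rw [this, hcase, hU₀, Real.sign_of_pos hpos]; ring
      have hylog : Real.log |U| = |S| * Real.log C := by
        rw [hcase, hE, Real.log_exp]
      rw [hylog, hcase]
      have habsS : 0 ≤ |S| := abs_nonneg S
      rw [hcase] at hSUlt
      have h1 : (1 / Real.log C) * C ^ |S| + (1 / Real.log C) *
          (C ^ |S| * (|S| * Real.log C) - C ^ |S|) = |S| * C ^ |S| := by
        field_simp; ring
      linarith
    · -- strict Young inequality
      rw [hE] at hcase
      have h1 := young_strict (|S| * Real.log C) (|U|) huabs hcase
      rw [← hE] at h1
      have h2 : (1 / Real.log C) * (|U| * (|S| * Real.log C) - C ^ |S|) <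
          (1 / Real.log C) * (|U| * Real.log |U| - |U|) := by
        apply (mul_lt_mul_iff_right₀ (by positivity)).mpr h1
      have h3 : (1 / Real.log C) * (|U| * (|S| * Real.log C) - C ^ |S|) =
          |S| * |U| - (1 / Real.log C) * C ^ |S| := by
        field_simp
      linarith
end
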